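/- Let d, w₁, w₂ be positive integers, ξ a root of unity, χ a Dirichlet character mod d, m ≥ 1. Then for all n ≥ 0, after clearing denominators by w₁w₂: ∑_{k=0}^{n} C(n,k) w₁^{k} w₂^{n−k+1} B^{(m−1)}_{n−k,χ,ξ^{w₂}}(w₁y) ∑_{i=0}^{w₁d−1} χ(i) ξ^{w₂i} B^{(m)}_{k,χ,ξ^{w₁}}(w₂x + (w₂/w₁)i) = ∑_{k=0}^{n} C(n,k) w₂^{k} w₁^{n−k+1} B^{(m−1)}_{n−k,χ,ξ^{w₁}}(w₂y) ∑_{i=0}^{w₂d−1} χ(i) ξ^{w₁i} B^{(m)}_{k,χ,ξ^{w₂}}(w₁x + (w₁/w₂)i) (Theorem 3). -/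

import Mathlib

/-- `e^{at}` as a formal power series over `ℂ`. -/
noncomputable def expS (a : ℂ) : PowerSeries ℂ :=
  PowerSeries.mk fun n => a ^ n / n.factorial

open PowerSeries Finset

lemma expS_eq (a : ℂ) : expS a = rescale a (PowerSeries.exp ℂ) := by
  ext n; simp [expS, coeff_rescale, coeff_exp, div_eq_mul_inv]

lemma expS_add (a b : ℂ) : expS a * expS b = expS (a + b) := by
  rw [expS_eq, expS_eq, expS_eq, exp_mul_exp_eq_exp_add]

lemma rescale_expS (a b : ℂ) : rescale a (expS b) = expS (b * a) := by
  rw [expS_eq, expS_eq, rescale_rescale]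

lemma rescale_C' (a r : ℂ) : rescale a (PowerSeries.C (R := ℂ) r) = PowerSeries.C (R := ℂ) r := by
  ext n; cases n <;> simp [coeff_rescale]

lemma expS_zero : expS 0 = 1 := by
  ext n; cases n <;> simp [expS, coeff_one]

lemma C_expS_pow (a c : ℂ) (j : ℕ) :
    (PowerSeries.C (R := ℂ) a * expS c) ^ j = PowerSeries.C (R := ℂ) (a ^ j) * expS (c * j) := by
  induction j with
  | zero => simp [expS_zero]
  | succ j ih =>
    rw [pow_succ, ih]
    have : PowerSeries.C (R := ℂ) (a ^ j) * expS (c * j) * (PowerSeries.C (R := ℂ) a * expS c)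
        = (PowerSeries.C (R := ℂ) (a ^ j) * PowerSeries.C (R := ℂ) a) * (expS (c * j) * expS c) := by ring
    rw [this, ← map_mul, expS_add, ← pow_succ]
    congr 1
    push_cast; ring

lemma E_ne_zero (ζ c : ℂ) (hζ : ζ ≠ 0) (hc : c ≠ 0) :
    PowerSeries.C (R := ℂ) ζ * expS c - 1 ≠ 0 := by
  intro h
  have h0 := congrArg (PowerSeries.coeff (R := ℂ) 0) h
  have h1 := congrArg (PowerSeries.coeff (R := ℂ) 1) h
  simp [expS, coeff_one, PowerSeries.coeff_mk] at h0 h1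
  tauto

lemma key_sum (d : ℕ) (χ : DirichletCharacter ℂ d) (ξ : ℂ) (v w : ℕ) :
    ∑ i ∈ range (w * d), PowerSeries.C (R := ℂ) (χ (i : ZMod d) * ξ ^ (v * i)) * expS ((v : ℂ) * i) =
      (∑ a ∈ range d, PowerSeries.C (R := ℂ) (χ (a : ZMod d) * (ξ ^ v) ^ a) * expS ((v : ℂ) * a)) *
        ∑ j ∈ range w, (PowerSeries.C (R := ℂ) (ξ ^ (v * d)) * expS ((v : ℂ) * d)) ^ j := by
  induction w with
  | zero => simp
  | succ w ih =>
    rw [show (w + 1) * d = w * d + d by ring, Finset.sum_range_add, ih, Finset.sum_range_succ,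
        mul_add]
    congr 1
    rw [Finset.sum_mul]
    refine Finset.sum_congr rfl fun a _ => ?_
    have hz : ((w * d + a : ℕ) : ZMod d) = (a : ZMod d) := by push_cast [ZMod.natCast_self]; ring
    rw [hz, C_expS_pow]
    have hξ : ξ ^ (v * (w * d + a)) = (ξ ^ v) ^ a * (ξ ^ (v * d)) ^ w := by
      rw [← pow_mul, ← pow_mul, ← pow_add]; congr 1; ring
    have he : ((v : ℂ) * ((w * d + a : ℕ) : ℂ)) = (v : ℂ) * a + (v : ℂ) * d * w := by
      push_cast; ring
    simp only [hξ, he, ← expS_add, map_mul]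
    ring

lemma rescale_S (d : ℕ) (χ : DirichletCharacter ℂ d) (ζ : ℂ) (v : ℕ) :
    rescale (v : ℂ) (∑ a ∈ range d, PowerSeries.C (R := ℂ) (χ (a : ZMod d) * ζ ^ a) * expS a) =
      ∑ a ∈ range d, PowerSeries.C (R := ℂ) (χ (a : ZMod d) * ζ ^ a) * expS ((v : ℂ) * a) := by
  rw [map_sum]
  refine Finset.sum_congr rfl fun a _ => ?_
  rw [map_mul, rescale_C', rescale_expS, mul_comm (a : ℂ)]

lemma side (d w v : ℕ) (hw : (w : ℂ) ≠ 0) (ξ : ℂ)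
    (χ : DirichletCharacter ℂ d) (Bw Bv : ℕ → ℕ → ℂ → ℂ)
    (hBw : ∀ (m : ℕ) (x : ℂ),
      (PowerSeries.mk fun n => Bw m n x / n.factorial) *
          (PowerSeries.C (R := ℂ) ((ξ ^ w) ^ d) * expS d - 1) ^ m =
        (PowerSeries.X *
            ∑ a ∈ Finset.range d, PowerSeries.C (R := ℂ) (χ (a : ZMod d) * (ξ ^ w) ^ a) * expS a) ^ m *
          expS x)
    (hBv : ∀ (m : ℕ) (x : ℂ),
      (PowerSeries.mk fun n => Bv m n x / n.factorial) *
          (PowerSeries.C (R := ℂ) ((ξ ^ v) ^ d) * expS d - 1) ^ m =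
        (PowerSeries.X *
            ∑ a ∈ Finset.range d, PowerSeries.C (R := ℂ) (χ (a : ZMod d) * (ξ ^ v) ^ a) * expS a) ^ m *
          expS x)
    (p : ℕ) (x y : ℂ) :
    (PowerSeries.C (R := ℂ) (v : ℂ) *
        rescale (v : ℂ) (PowerSeries.mk fun n => Bv p n ((w : ℂ) * y) / n.factorial) *
        ∑ i ∈ range (w * d), PowerSeries.C (R := ℂ) (χ (i : ZMod d) * ξ ^ (v * i)) *
          rescale (w : ℂ)
            (PowerSeries.mk fun n =>
              Bw (p + 1) n ((v : ℂ) * x + ((v : ℂ) / (w : ℂ)) * i) / n.factorial)) *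
      ((PowerSeries.C (R := ℂ) (ξ ^ (w * d)) * expS ((w : ℂ) * d) - 1) ^ (p + 1) *
        (PowerSeries.C (R := ℂ) (ξ ^ (v * d)) * expS ((v : ℂ) * d) - 1) ^ (p + 1)) =
    PowerSeries.C (R := ℂ) ((w : ℂ) ^ (p + 1) * (v : ℂ) ^ (p + 1)) * PowerSeries.X ^ (2 * p + 1) *
      (rescale (w : ℂ)
          (∑ a ∈ range d, PowerSeries.C (R := ℂ) (χ (a : ZMod d) * (ξ ^ w) ^ a) * expS a)) ^ (p + 1) *
      (rescale (v : ℂ)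
          (∑ a ∈ range d, PowerSeries.C (R := ℂ) (χ (a : ZMod d) * (ξ ^ v) ^ a) * expS a)) ^ (p + 1) *
      expS ((w : ℂ) * (v : ℂ) * x) * expS ((w : ℂ) * (v : ℂ) * y) *
      (PowerSeries.C (R := ℂ) (ξ ^ (w * (v * d))) * expS ((w : ℂ) * ((v : ℂ) * d)) - 1) := by
  set Sw := ∑ a ∈ range d, PowerSeries.C (R := ℂ) (χ (a : ZMod d) * (ξ ^ w) ^ a) * expS (a : ℂ) with hSw
  set Sv := ∑ a ∈ range d, PowerSeries.C (R := ℂ) (χ (a : ZMod d) * (ξ ^ v) ^ a) * expS (a : ℂ) with hSv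
  set Ew := PowerSeries.C (R := ℂ) (ξ ^ (w * d)) * expS ((w : ℂ) * d) - 1 with hEw
  set Ev := PowerSeries.C (R := ℂ) (ξ ^ (v * d)) * expS ((v : ℂ) * d) - 1 with hEv
  -- rescaled generating identities
  have hrw : ∀ x' : ℂ,
      rescale (w : ℂ) (PowerSeries.mk fun n => Bw (p + 1) n x' / n.factorial) * Ew ^ (p + 1) =
        (PowerSeries.C (R := ℂ) (w : ℂ) * PowerSeries.X * rescale (w : ℂ) Sw) ^ (p + 1) *
          expS ((w : ℂ) * x') := by
    intro x'
    have h := congrArg (rescale (w : ℂ)) (hBw (p + 1) x')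
    simp only [map_mul, map_pow, map_sub, map_one, rescale_X, rescale_expS, rescale_C'] at h
    have e1 : ((PowerSeries.C (R := ℂ) ξ) ^ w) ^ d * expS ((d : ℂ) * w) - 1 = Ew := by
      rw [← map_pow, ← map_pow, ← pow_mul, hEw, mul_comm (d : ℂ)]
    rw [e1, show x' * (w : ℂ) = (w : ℂ) * x' from mul_comm _ _] at h
    exact h
  have hrv :
      rescale (v : ℂ) (PowerSeries.mk fun n => Bv p n ((w : ℂ) * y) / n.factorial) * Ev ^ p =
        (PowerSeries.C (R := ℂ) (v : ℂ) * PowerSeries.X * rescale (v : ℂ) Sv) ^ p *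
          expS ((w : ℂ) * (v : ℂ) * y) := by
    have h := congrArg (rescale (v : ℂ)) (hBv p ((w : ℂ) * y))
    simp only [map_mul, map_pow, map_sub, map_one, rescale_X, rescale_expS, rescale_C'] at h
    have e1 : ((PowerSeries.C (R := ℂ) ξ) ^ v) ^ d * expS ((d : ℂ) * v) - 1 = Ev := by
      rw [← map_pow, ← map_pow, ← pow_mul, hEv, mul_comm (d : ℂ)]
    rw [e1, show (w : ℂ) * y * (v : ℂ) = (w : ℂ) * (v : ℂ) * y from by ring] at h
    exact h
  -- inner sum identity
  have hsum :
      (∑ i ∈ range (w * d), PowerSeries.C (R := ℂ) (χ (i : ZMod d) * ξ ^ (v * i)) *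
          rescale (w : ℂ)
            (PowerSeries.mk fun n =>
              Bw (p + 1) n ((v : ℂ) * x + ((v : ℂ) / (w : ℂ)) * i) / n.factorial)) *
        Ew ^ (p + 1) =
      (PowerSeries.C (R := ℂ) (w : ℂ) * PowerSeries.X * rescale (w : ℂ) Sw) ^ (p + 1) *
        expS ((w : ℂ) * (v : ℂ) * x) *
        ((rescale (v : ℂ) Sv) *
          ∑ j ∈ range w, (PowerSeries.C (R := ℂ) (ξ ^ (v * d)) * expS ((v : ℂ) * d)) ^ j) := by
    rw [Finset.sum_mul]
    have step : ∀ i : ℕ,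
        (PowerSeries.C (R := ℂ) (χ (i : ZMod d) * ξ ^ (v * i)) *
            rescale (w : ℂ)
              (PowerSeries.mk fun n =>
                Bw (p + 1) n ((v : ℂ) * x + ((v : ℂ) / (w : ℂ)) * i) / n.factorial)) *
          Ew ^ (p + 1) =
        (PowerSeries.C (R := ℂ) (w : ℂ) * PowerSeries.X * rescale (w : ℂ) Sw) ^ (p + 1) *
          expS ((w : ℂ) * (v : ℂ) * x) *
          (PowerSeries.C (R := ℂ) (χ (i : ZMod d) * ξ ^ (v * i)) * expS ((v : ℂ) * i)) := by
      intro i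
      have h := hrw ((v : ℂ) * x + ((v : ℂ) / (w : ℂ)) * i)
      have harg : (w : ℂ) * ((v : ℂ) * x + ((v : ℂ) / (w : ℂ)) * i)
          = (w : ℂ) * (v : ℂ) * x + (v : ℂ) * i := by
        field_simp
      rw [harg, ← expS_add] at h
      calc (PowerSeries.C (R := ℂ) (χ (i : ZMod d) * ξ ^ (v * i)) *
            rescale (w : ℂ)
              (PowerSeries.mk fun n =>
                Bw (p + 1) n ((v : ℂ) * x + ((v : ℂ) / (w : ℂ)) * i) / n.factorial)) *
          Ew ^ (p + 1)
          = PowerSeries.C (R := ℂ) (χ (i : ZMod d) * ξ ^ (v * i)) *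
            (rescale (w : ℂ)
              (PowerSeries.mk fun n =>
                Bw (p + 1) n ((v : ℂ) * x + ((v : ℂ) / (w : ℂ)) * i) / n.factorial) *
              Ew ^ (p + 1)) := by ring
        _ = _ := by rw [h]; ring
    rw [Finset.sum_congr rfl fun i _ => step i, ← Finset.mul_sum, key_sum d χ ξ v w,
        rescale_S d χ (ξ ^ v) v]
  -- geometric sum
  have hgeo :
      (∑ j ∈ range w, (PowerSeries.C (R := ℂ) (ξ ^ (v * d)) * expS ((v : ℂ) * d)) ^ j) * Ev =
        PowerSeries.C (R := ℂ) (ξ ^ (w * (v * d))) * expS ((w : ℂ) * ((v : ℂ) * d)) - 1 := by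
    rw [hEv, geom_sum_mul, C_expS_pow]
    congr 2
    · rw [← pow_mul]; congr 1; ring
    · ring
  -- assemble
  calc
    (PowerSeries.C (R := ℂ) (v : ℂ) *
        rescale (v : ℂ) (PowerSeries.mk fun n => Bv p n ((w : ℂ) * y) / n.factorial) *
        ∑ i ∈ range (w * d), PowerSeries.C (R := ℂ) (χ (i : ZMod d) * ξ ^ (v * i)) *
          rescale (w : ℂ)
            (PowerSeries.mk fun n =>
              Bw (p + 1) n ((v : ℂ) * x + ((v : ℂ) / (w : ℂ)) * i) / n.factorial)) *
      (Ew ^ (p + 1) * Ev ^ (p + 1))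
      = PowerSeries.C (R := ℂ) (v : ℂ) *
        (rescale (v : ℂ) (PowerSeries.mk fun n => Bv p n ((w : ℂ) * y) / n.factorial) * Ev ^ p) *
        ((∑ i ∈ range (w * d), PowerSeries.C (R := ℂ) (χ (i : ZMod d) * ξ ^ (v * i)) *
          rescale (w : ℂ)
            (PowerSeries.mk fun n =>
              Bw (p + 1) n ((v : ℂ) * x + ((v : ℂ) / (w : ℂ)) * i) / n.factorial)) *
          Ew ^ (p + 1)) * Ev := by rw [pow_succ]; ring
    _ = PowerSeries.C (R := ℂ) (v : ℂ) *
        ((PowerSeries.C (R := ℂ) (v : ℂ) * PowerSeries.X * rescale (v : ℂ) Sv) ^ p *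
          expS ((w : ℂ) * (v : ℂ) * y)) *
        ((PowerSeries.C (R := ℂ) (w : ℂ) * PowerSeries.X * rescale (w : ℂ) Sw) ^ (p + 1) *
          expS ((w : ℂ) * (v : ℂ) * x) * (rescale (v : ℂ) Sv *
          ∑ j ∈ range w, (PowerSeries.C (R := ℂ) (ξ ^ (v * d)) * expS ((v : ℂ) * d)) ^ j)) * Ev := by
        rw [hrv, hsum]
    _ = PowerSeries.C (R := ℂ) (v : ℂ) *
        ((PowerSeries.C (R := ℂ) (v : ℂ) * PowerSeries.X * rescale (v : ℂ) Sv) ^ p *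
          expS ((w : ℂ) * (v : ℂ) * y)) *
        ((PowerSeries.C (R := ℂ) (w : ℂ) * PowerSeries.X * rescale (w : ℂ) Sw) ^ (p + 1) *
          expS ((w : ℂ) * (v : ℂ) * x) * rescale (v : ℂ) Sv) *
        ((∑ j ∈ range w, (PowerSeries.C (R := ℂ) (ξ ^ (v * d)) * expS ((v : ℂ) * d)) ^ j) * Ev) := by
        ring
    _ = _ := by
        rw [hgeo, show PowerSeries.C (R := ℂ) ((w : ℂ) ^ (p + 1) * (v : ℂ) ^ (p + 1))
            = (PowerSeries.C (R := ℂ) (w : ℂ)) ^ (p + 1) * (PowerSeries.C (R := ℂ) (v : ℂ)) ^ (p + 1) by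
              rw [map_mul, map_pow, map_pow]]
        ring

lemma coeff_side (w v dd : ℕ) (c g : ℕ → ℂ) (f : ℕ → ℕ → ℂ) (n : ℕ) :
    (n.factorial : ℂ) * PowerSeries.coeff (R := ℂ) n
      (PowerSeries.C (R := ℂ) (v : ℂ) *
        rescale (v : ℂ) (PowerSeries.mk fun k => g k / k.factorial) *
        ∑ i ∈ range (w * dd), PowerSeries.C (R := ℂ) (c i) *
          rescale (w : ℂ) (PowerSeries.mk fun k => f i k / k.factorial)) =
    ∑ k ∈ range (n + 1), (n.choose k : ℂ) * (w : ℂ) ^ k * (v : ℂ) ^ (n - k + 1) * g (n - k) *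
      ∑ i ∈ range (w * dd), c i * f i k := by
  have hA : (∑ i ∈ range (w * dd), PowerSeries.C (R := ℂ) (c i) *
      rescale (w : ℂ) (PowerSeries.mk fun k => f i k / k.factorial))
      = PowerSeries.mk fun k =>
          (w : ℂ) ^ k * (∑ i ∈ range (w * dd), c i * f i k) / k.factorial := by
    ext k
    simp only [map_sum, PowerSeries.coeff_C_mul, coeff_rescale, PowerSeries.coeff_mk]
    rw [Finset.mul_sum, Finset.sum_div]
    exact Finset.sum_congr rfl fun i _ => by ring
  have hB : rescale (v : ℂ) (PowerSeries.mk fun k => g k / k.factorial)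
      = PowerSeries.mk fun k => (v : ℂ) ^ k * g k / k.factorial := by
    ext k
    simp only [coeff_rescale, PowerSeries.coeff_mk]
    ring
  rw [hA, hB, show PowerSeries.C (R := ℂ) (v : ℂ) *
      (PowerSeries.mk fun k => (v : ℂ) ^ k * g k / k.factorial) *
      (PowerSeries.mk fun k => (w : ℂ) ^ k * (∑ i ∈ range (w * dd), c i * f i k) / k.factorial)
      = PowerSeries.C (R := ℂ) (v : ℂ) *
      ((PowerSeries.mk fun k => (w : ℂ) ^ k * (∑ i ∈ range (w * dd), c i * f i k) / k.factorial) *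
      (PowerSeries.mk fun k => (v : ℂ) ^ k * g k / k.factorial)) from by ring,
    PowerSeries.coeff_C_mul, PowerSeries.coeff_mul,
    Finset.Nat.sum_antidiagonal_eq_sum_range_succ_mk, Finset.mul_sum, Finset.mul_sum]
  refine Finset.sum_congr rfl fun k hk => ?_
  have hk' : k ≤ n := Finset.mem_range_succ_iff.mp hk
  have hch : (n.choose k : ℂ) * k.factorial * (n - k).factorial = n.factorial := by
    exact_mod_cast Nat.choose_mul_factorial_mul_factorial hk'
  simp only [PowerSeries.coeff_mk]
  rw [← hch]
  have h1 : (k.factorial : ℂ) ≠ 0 := Nat.cast_ne_zero.mpr k.factorial_ne_zero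
  have h2 : ((n - k).factorial : ℂ) ≠ 0 := Nat.cast_ne_zero.mpr (n - k).factorial_ne_zero
  field_simp
  ring

/-- Theorem 3: multiplication-type symmetry identity for the generalized twisted
Bernoulli polynomials of higher order, with both sides multiplied by `w₁w₂`.
`B1 m n`, `B2 m n` are the order-`m` generalized twisted Bernoulli polynomials
attached to `χ` with twists `ξ^{w₁}` and `ξ^{w₂}` respectively. -/
theorem generalized_twisted_bernoulli_higher_order_mult_symmetry
    (d w₁ w₂ : ℕ) (hd : 0 < d) (hw₁ : 0 < w₁) (hw₂ : 0 < w₂)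
    (ξ : ℂ) (hξ : ∃ k : ℕ, 0 < k ∧ ξ ^ k = 1)
    (χ : DirichletCharacter ℂ d) (B1 B2 : ℕ → ℕ → ℂ → ℂ)
    (hB1 : ∀ (m : ℕ) (x : ℂ),
      (PowerSeries.mk fun n => B1 m n x / n.factorial) *
          (PowerSeries.C (R := ℂ) ((ξ ^ w₁) ^ d) * expS d - 1) ^ m =
        (PowerSeries.X *
            ∑ a ∈ Finset.range d, PowerSeries.C (R := ℂ) (χ (a : ZMod d) * (ξ ^ w₁) ^ a) * expS a) ^ m *
          expS x)
    (hB2 : ∀ (m : ℕ) (x : ℂ),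
      (PowerSeries.mk fun n => B2 m n x / n.factorial) *
          (PowerSeries.C (R := ℂ) ((ξ ^ w₂) ^ d) * expS d - 1) ^ m =
        (PowerSeries.X *
            ∑ a ∈ Finset.range d, PowerSeries.C (R := ℂ) (χ (a : ZMod d) * (ξ ^ w₂) ^ a) * expS a) ^ m *
          expS x)
    (m : ℕ) (hm : 1 ≤ m) (n : ℕ) (x y : ℂ) :
    ∑ k ∈ Finset.range (n + 1), (n.choose k : ℂ) * (w₁ : ℂ) ^ k * (w₂ : ℂ) ^ (n - k + 1) *
        B2 (m - 1) (n - k) ((w₁ : ℂ) * y) *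
        ∑ i ∈ Finset.range (w₁ * d), χ (i : ZMod d) * ξ ^ (w₂ * i) *
          B1 m k ((w₂ : ℂ) * x + ((w₂ : ℂ) / (w₁ : ℂ)) * i) =
      ∑ k ∈ Finset.range (n + 1), (n.choose k : ℂ) * (w₂ : ℂ) ^ k * (w₁ : ℂ) ^ (n - k + 1) *
        B1 (m - 1) (n - k) ((w₂ : ℂ) * y) *
        ∑ i ∈ Finset.range (w₂ * d), χ (i : ZMod d) * ξ ^ (w₁ * i) *
          B2 m k ((w₁ : ℂ) * x + ((w₁ : ℂ) / (w₂ : ℂ)) * i) := by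
  obtain ⟨k₀, hk₀, hξk⟩ := hξ
  have hξ0 : ξ ≠ 0 := by
    intro h
    rw [h, zero_pow hk₀.ne'] at hξk
    exact zero_ne_one hξk
  have hw₁' : (w₁ : ℂ) ≠ 0 := Nat.cast_ne_zero.mpr hw₁.ne'
  have hw₂' : (w₂ : ℂ) ≠ 0 := Nat.cast_ne_zero.mpr hw₂.ne'
  have hd' : (d : ℂ) ≠ 0 := Nat.cast_ne_zero.mpr hd.ne'
  obtain ⟨p, rfl⟩ : ∃ p, m = p + 1 := ⟨m - 1, by omega⟩
  simp only [Nat.add_sub_cancel]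
  have hL := side d w₁ w₂ hw₁' ξ χ B1 B2 hB1 hB2 p x y
  have hR := side d w₂ w₁ hw₂' ξ χ B2 B1 hB2 hB1 p x y
  set E₁ := PowerSeries.C (R := ℂ) (ξ ^ (w₁ * d)) * expS ((w₁ : ℂ) * d) - 1 with hE₁
  set E₂ := PowerSeries.C (R := ℂ) (ξ ^ (w₂ * d)) * expS ((w₂ : ℂ) * d) - 1 with hE₂
  have hE₁0 : E₁ ≠ 0 := E_ne_zero _ _ (pow_ne_zero _ hξ0) (mul_ne_zero hw₁' hd')
  have hE₂0 : E₂ ≠ 0 := E_ne_zero _ _ (pow_ne_zero _ hξ0) (mul_ne_zero hw₂' hd')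
  have hM : E₁ ^ (p + 1) * E₂ ^ (p + 1) ≠ 0 :=
    mul_ne_zero (pow_ne_zero _ hE₁0) (pow_ne_zero _ hE₂0)
  -- equality of the two generating series
  have hLR :
      PowerSeries.C (R := ℂ) (w₂ : ℂ) *
        rescale (w₂ : ℂ) (PowerSeries.mk fun k => B2 p k ((w₁ : ℂ) * y) / k.factorial) *
        ∑ i ∈ range (w₁ * d), PowerSeries.C (R := ℂ) (χ (i : ZMod d) * ξ ^ (w₂ * i)) *
          rescale (w₁ : ℂ)
            (PowerSeries.mk fun k =>
              B1 (p + 1) k ((w₂ : ℂ) * x + ((w₂ : ℂ) / (w₁ : ℂ)) * i) / k.factorial) =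
      PowerSeries.C (R := ℂ) (w₁ : ℂ) *
        rescale (w₁ : ℂ) (PowerSeries.mk fun k => B1 p k ((w₂ : ℂ) * y) / k.factorial) *
        ∑ i ∈ range (w₂ * d), PowerSeries.C (R := ℂ) (χ (i : ZMod d) * ξ ^ (w₁ * i)) *
          rescale (w₂ : ℂ)
            (PowerSeries.mk fun k =>
              B2 (p + 1) k ((w₁ : ℂ) * x + ((w₁ : ℂ) / (w₂ : ℂ)) * i) / k.factorial) := by
    apply mul_right_cancel₀ hM
    rw [hL]
    have e1 : (w₁ : ℂ) ^ (p + 1) * (w₂ : ℂ) ^ (p + 1)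
        = (w₂ : ℂ) ^ (p + 1) * (w₁ : ℂ) ^ (p + 1) := mul_comm _ _
    have e2 : w₁ * (w₂ * d) = w₂ * (w₁ * d) := by ring
    have e3 : (w₁ : ℂ) * (w₂ : ℂ) * x = (w₂ : ℂ) * (w₁ : ℂ) * x := by ring
    have e4 : (w₁ : ℂ) * (w₂ : ℂ) * y = (w₂ : ℂ) * (w₁ : ℂ) * y := by ring
    have e5 : (w₁ : ℂ) * ((w₂ : ℂ) * d) = (w₂ : ℂ) * ((w₁ : ℂ) * d) := by ring
    rw [e1, e2, e3, e4, e5]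
    linear_combination -hR
  have h1 := coeff_side w₁ w₂ d (fun i => χ (i : ZMod d) * ξ ^ (w₂ * i))
    (fun k => B2 p k ((w₁ : ℂ) * y))
    (fun i k => B1 (p + 1) k ((w₂ : ℂ) * x + ((w₂ : ℂ) / (w₁ : ℂ)) * i)) n
  have h2 := coeff_side w₂ w₁ d (fun i => χ (i : ZMod d) * ξ ^ (w₁ * i))
    (fun k => B1 p k ((w₂ : ℂ) * y))
    (fun i k => B2 (p + 1) k ((w₁ : ℂ) * x + ((w₁ : ℂ) / (w₂ : ℂ)) * i)) n
  calc
    _ = (n.factorial : ℂ) * PowerSeries.coeff (R := ℂ) n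
          (PowerSeries.C (R := ℂ) (w₂ : ℂ) *
            rescale (w₂ : ℂ) (PowerSeries.mk fun k => B2 p k ((w₁ : ℂ) * y) / k.factorial) *
            ∑ i ∈ range (w₁ * d), PowerSeries.C (R := ℂ) (χ (i : ZMod d) * ξ ^ (w₂ * i)) *
              rescale (w₁ : ℂ)
                (PowerSeries.mk fun k =>
                  B1 (p + 1) k ((w₂ : ℂ) * x + ((w₂ : ℂ) / (w₁ : ℂ)) * i) / k.factorial)) :=
      h1.symm
    _ = (n.factorial : ℂ) * PowerSeries.coeff (R := ℂ) n
          (PowerSeries.C (R := ℂ) (w₁ : ℂ) *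
            rescale (w₁ : ℂ) (PowerSeries.mk fun k => B1 p k ((w₂ : ℂ) * y) / k.factorial) *
            ∑ i ∈ range (w₂ * d), PowerSeries.C (R := ℂ) (χ (i : ZMod d) * ξ ^ (w₁ * i)) *
              rescale (w₂ : ℂ)
                (PowerSeries.mk fun k =>
                  B2 (p + 1) k ((w₁ : ℂ) * x + ((w₁ : ℂ) / (w₂ : ℂ)) * i) / k.factorial)) := by
      rw [hLR]
    _ = _ := h2
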